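/- arXiv:1508.02705 — 2 statements merged into one kernel-verified Lean document; each statement's English description precedes it below -/
import Mathlib

section
/- Let ρ0 and ρ1 be binary relations on a set S of states, and let w : ℕ → S be an infinite sequence that does not satisfy □(ρ0 ∧ ρ1), i.e., there exists k ∈ ℕ such that ρ0(w k, w(k+1)) and ρ1(w k, w(k+1)) do not both hold. Then for at least one j ∈ {0, 1}, the sequence w violates the property □((⊖⧖ρ_{1−j}) → ρ_j); concretely, there exists k ∈ ℕ such that ρ_{1−j}(w r, w(r+1)) holds for every r < k, but ρ_j(w k, w(k+1)) fails. -/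
/-- If an infinite sequence `w` violates `□(ρ0 ∧ ρ1)`, then for at
least one player `j ∈ {0,1}`, the sequence violates `□((⊖⧖ρ_{1−j}) → ρ_j)`:
there is a position `k` such that `ρ_{1−j}` holds at all positions `r < k` but
`ρ_j` fails at position `k`. -/
theorem transition_relations_hold {S : Type*} (ρ0 ρ1 : S → S → Prop) (w : ℕ → S)
    (h : ∃ k : ℕ, ¬ (ρ0 (w k) (w (k + 1)) ∧ ρ1 (w k) (w (k + 1)))) :
    (∃ k : ℕ, (∀ r < k, ρ1 (w r) (w (r + 1))) ∧ ¬ ρ0 (w k) (w (k + 1))) ∨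
    (∃ k : ℕ, (∀ r < k, ρ0 (w r) (w (r + 1))) ∧ ¬ ρ1 (w k) (w (k + 1))) := by
  classical
  set m := Nat.find h with hm
  have hspec := Nat.find_spec h
  have hbefore : ∀ r < m, ρ0 (w r) (w (r + 1)) ∧ ρ1 (w r) (w (r + 1)) := fun r hr =>
    of_not_not (Nat.find_min h hr)
  rw [not_and_or] at hspec
  rcases hspec with h0 | h1
  · exact Or.inl ⟨m, fun r hr => (hbefore r hr).2, h0⟩
  · exact Or.inr ⟨m, fun r hr => (hbefore r hr).1, h1⟩
end

section
/- For the turn-based game graph of Figure 1, for every set P ⊆ V and every initial node v ∈ V, at least one of the following fails: (i) player 1 realizes the recurrence property □◇P from v; (ii) player 0 realizes the property □◇P → □◇G from v, where G = {s6}. In other words, no weak fairness assumption given by a set of nodes makes the pair of contracts mutually realizable. -/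
/-!
Player 0 can trap the play in `{s0, s1}` (moving `s1 → s0`, `s3 → s4`) or in `{s2, s3}` (moving
`s1 → s2`, `s3 → s2`), so if player 1 realizes `□◇P`, then `P` meets both sets. Player 1, in
turn, can refuse `s4 → s5` forever. Then `s6` is visited at most once, while every cycle of the
remaining graph passes through a node of `P`, so `P` is visited infinitely often and player 0's
contract fails. Reaching a set, and staying in it, is certified by a rank function that
decreases strictly along every move leaving from outside the set.
-/

namespace Fig1

/-- Nodes `s0, …, s7` of the game graph of Figure 1. -/
abbrev V := Fin 8

/-- Player 0 owns the odd-indexed nodes `s1, s3, s5, s7`;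
player 1 owns the even-indexed nodes `s0, s2, s4, s6`. -/
def owner : V → Fin 2 := fun v => if v.val % 2 = 1 then 0 else 1

/-- The edge relation of player `j`:
`ρ0 = {s1→s0, s1→s2, s3→s2, s3→s4, s5→s6, s7→s1}` and
`ρ1 = {s0→s1, s2→s3, s4→s1, s4→s5, s6→s7}`. -/
def ρ : Fin 2 → V → V → Prop := fun j v u =>
  ((j.val, v.val, u.val) : ℕ × ℕ × ℕ) ∈
    [(0,1,0), (0,1,2), (0,3,2), (0,3,4), (0,5,6), (0,7,1),
     (1,0,1), (1,2,3), (1,4,1), (1,4,5), (1,6,7)]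

/-- An infinite play: every step is an edge of the player owning the current node. -/
def IsPlay (w : ℕ → V) : Prop := ∀ k : ℕ, ρ (owner (w k)) (w k) (w (k + 1))

/-- A strategy maps a finite history together with the current node to the next node. -/
abbrev Strategy := List V → V → V

/-- A strategy of player `j` must choose edges of `ρ j` at nodes owned by player `j`. -/
def ValidStrategy (j : Fin 2) (σ : Strategy) : Prop :=
  ∀ (h : List V) (v : V), owner v = j → ρ j v (σ h v)

/-- A play is consistent with a strategy of player `j` if at every position owned
by player `j`, the next node is the one chosen by the strategy. -/
def Consistent (j : Fin 2) (σ : Strategy) (w : ℕ → V) : Prop :=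
  ∀ k : ℕ, owner (w k) = j → w (k + 1) = σ ((List.range k).map w) (w k)

/-- `□◇P`: the play visits `P` infinitely often. -/
def InfOften (P : Set V) (w : ℕ → V) : Prop := ∀ N : ℕ, ∃ k ≥ N, w k ∈ P

/-- Player `j` realizes property `φ` from node `v`. -/
def Realizes (j : Fin 2) (v : V) (φ : (ℕ → V) → Prop) : Prop :=
  ∃ σ : Strategy, ValidStrategy j σ ∧
    ∀ w : ℕ → V, IsPlay w → w 0 = v → Consistent j σ w → φ w

open Filter

instance (j : Fin 2) (x y : V) : Decidable (ρ j x y) := by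
  unfold ρ; infer_instance

section Rank

variable {α : Type*} {R : α → α → Prop} {w : ℕ → α}

theorem frequently_mem_of_rank (hw : ∀ k, R (w k) (w (k + 1))) {S : Set α} (rank : α → ℕ)
    (hrank : ∀ x y, R x y → x ∉ S → rank y < rank x) : ∃ᶠ k in atTop, w k ∈ S := by
  refine frequently_atTop.2 fun N => ?_
  by_contra! hout
  obtain ⟨n, hn⟩ := WellFounded.not_rel_apply_succ (r := (· < ·)) fun n => rank (w (N + n))
  exact hn (hrank _ _ (hw (N + n)) (hout (N + n) (Nat.le_add_right N n)))

theorem eventually_mem_of_rank (hw : ∀ k, R (w k) (w (k + 1))) {T : Set α}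
    (hT : ∀ x y, R x y → x ∈ T → y ∈ T) (rank : α → ℕ)
    (hrank : ∀ x y, R x y → x ∉ T → rank y < rank x) : ∀ᶠ k in atTop, w k ∈ T := by
  obtain ⟨N, hN⟩ := (frequently_mem_of_rank hw rank hrank).exists
  exact eventually_atTop.2 ⟨N, fun k hk => Nat.le_induction hN (fun n _ ih => hT _ _ (hw n) ih) k hk⟩

end Rank

theorem infOften_iff_frequently {P : Set V} {w : ℕ → V} :
    InfOften P w ↔ ∃ᶠ k in atTop, w k ∈ P :=
  frequently_atTop.symm

section Outcome

/-- The pair (history, current node) after `k` moves when each player `j` follows `σ j`. -/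
def outcomeAux (σ : Fin 2 → Strategy) (v : V) : ℕ → List V × V
  | 0 => ([], v)
  | k + 1 =>
    let p := outcomeAux σ v k
    (p.1 ++ [p.2], σ (owner p.2) p.1 p.2)

def outcome (σ : Fin 2 → Strategy) (v : V) (k : ℕ) : V := (outcomeAux σ v k).2

variable (σ : Fin 2 → Strategy) (v : V)

theorem outcomeAux_fst (k : ℕ) : (outcomeAux σ v k).1 = (List.range k).map (outcome σ v) := by
  induction k with
  | zero => rfl
  | succ k ih => simp [outcomeAux, ih, List.range_succ, outcome]

theorem outcome_succ (k : ℕ) :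
    outcome σ v (k + 1) =
      σ (owner (outcome σ v k)) ((List.range k).map (outcome σ v)) (outcome σ v k) := by
  rw [← outcomeAux_fst]; rfl

theorem isPlay_outcome {σ : Fin 2 → Strategy} (hσ : ∀ j, ValidStrategy j (σ j)) :
    IsPlay (outcome σ v) := fun k => by
  rw [outcome_succ]; exact hσ _ _ _ rfl

theorem consistent_outcome (j : Fin 2) : Consistent j (σ j) (outcome σ v) := fun k hk => by
  rw [outcome_succ, hk]

end Outcome

theorem Realizes.exists_play {j j' : Fin 2} {v : V} {φ : (ℕ → V) → Prop}
    (h : Realizes j v φ) (hj : j' ≠ j) {τ : Strategy} (hτ : ValidStrategy j' τ) :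
    ∃ w, IsPlay w ∧ Consistent j' τ w ∧ φ w := by
  obtain ⟨σ, hσ, hφ⟩ := h
  let s : Fin 2 → Strategy := fun i => if i = j then σ else τ
  have hs : ∀ i, ValidStrategy i (s i) := by
    intro i
    by_cases hi : i = j
    · subst hi; simpa [s] using hσ
    · obtain rfl : i = j' := by omega
      simpa [s, hi] using hτ
  have hplay := isPlay_outcome v hs
  refine ⟨outcome s v, hplay, ?_, hφ _ hplay rfl ?_⟩
  · simpa [s, hj] using consistent_outcome s v j'
  · simpa [s] using consistent_outcome s v j

theorem validStrategy_memoryless_iff {j : Fin 2} {d : V → V} :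
    ValidStrategy j (fun _ x => d x) ↔ ∀ x, owner x = j → ρ j x (d x) :=
  ⟨fun h x => h [] x, fun h _ x => h x⟩

def MemorylessMove (j : Fin 2) (d : V → V) (x y : V) : Prop :=
  owner x = j ∧ y = d x ∨ owner x ≠ j ∧ ρ (owner x) x y

instance (j : Fin 2) (d : V → V) : DecidableRel (MemorylessMove j d) := fun _ _ => by
  unfold MemorylessMove; infer_instance

theorem IsPlay.memorylessMove {w : ℕ → V} (hw : IsPlay w) {j : Fin 2} {d : V → V}
    (hc : Consistent j (fun _ x => d x) w) (k : ℕ) : MemorylessMove j d (w k) (w (k + 1)) := by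
  by_cases hk : owner (w k) = j
  · exact .inl ⟨hk, hc k hk⟩
  · exact .inr ⟨hk, hw k⟩

/-- `hT` and `hrank` say that the memoryless strategy `d` of player 0 forces the play into `T`
for good. -/
theorem Realizes.exists_mem_of_trap {P : Set V} {v : V} (h : Realizes 1 v (InfOften P))
    {d : V → V} (hd : ∀ x, owner x = 0 → ρ 0 x (d x)) {T : Finset V}
    (hT : ∀ x y, MemorylessMove 0 d x y → x ∈ T → y ∈ T) (rank : V → ℕ)
    (hrank : ∀ x y, MemorylessMove 0 d x y → x ∉ T → rank y < rank x) : ∃ x ∈ T, x ∈ P := by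
  obtain ⟨w, hw, hc, hP⟩ := h.exists_play (by decide) (validStrategy_memoryless_iff.2 hd)
  have hT := eventually_mem_of_rank (hw.memorylessMove hc) (T := ↑T) hT rank hrank
  obtain ⟨k, hkP, hkT⟩ := (infOften_iff_frequently.1 hP |>.and_eventually hT).exists
  exact ⟨w k, hkT, hkP⟩

/-- Player 0 moves `s1 → s0` and `s3 → s4`, trapping the play in `{s0, s1}`. -/
def trapLow : V → V := ![0, 0, 0, 4, 0, 6, 0, 1]

/-- Player 0 moves `s1 → s2` and `s3 → s2`, trapping the play in `{s2, s3}`. -/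
def trapHigh : V → V := ![0, 2, 0, 2, 0, 6, 0, 1]

/-- Player 1 never moves `s4 → s5`, the only way to the goal `s6`. -/
def avoidGoal : V → V := ![1, 0, 3, 0, 1, 0, 7, 0]

theorem not_infOften_goal_of_avoidGoal {w : ℕ → V} (hw : IsPlay w)
    (hc : Consistent 1 (fun _ x => avoidGoal x) w) : ¬ InfOften {6} w := by
  intro h6
  have hT := eventually_mem_of_rank (hw.memorylessMove hc) (T := ↑({0, 1, 2, 3, 4} : Finset V))
    (by decide) ![0, 0, 0, 0, 0, 3, 2, 1] (by decide)
  obtain ⟨k, hk6, hkT⟩ := (infOften_iff_frequently.1 h6 |>.and_eventually hT).exists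
  rw [Set.mem_singleton_iff.1 hk6] at hkT
  exact absurd hkT (by decide)

/-- The ranks certify that every cycle of the graph under `avoidGoal` meets `{a, b}`. -/
theorem exists_rank_avoidGoal {a b : V} (ha : a = 0 ∨ a = 1) (hb : b = 2 ∨ b = 3) :
    ∃ rank : V → ℕ, ∀ x y, MemorylessMove 1 avoidGoal x y → x ≠ a → x ≠ b → rank y < rank x := by
  rcases ha with rfl | rfl <;> rcases hb with rfl | rfl
  exacts [⟨![0, 1, 0, 3, 2, 4, 3, 2], by decide⟩, ⟨![0, 2, 1, 0, 3, 5, 4, 3], by decide⟩,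
    ⟨![1, 0, 0, 2, 1, 3, 2, 1], by decide⟩, ⟨![1, 0, 1, 0, 1, 3, 2, 1], by decide⟩]

theorem infOften_of_avoidGoal {w : ℕ → V} (hw : IsPlay w)
    (hc : Consistent 1 (fun _ x => avoidGoal x) w) {P : Set V} {a b : V}
    (ha : a = 0 ∨ a = 1) (hb : b = 2 ∨ b = 3) (haP : a ∈ P) (hbP : b ∈ P) : InfOften P w := by
  obtain ⟨rank, hrank⟩ := exists_rank_avoidGoal ha hb
  have hab := frequently_mem_of_rank (hw.memorylessMove hc) (S := {a, b}) rank
    fun x y hxy hx => hrank x y hxy (fun h => hx (.inl h)) (fun h => hx (.inr h))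
  refine infOften_iff_frequently.2 (hab.mono fun k hk => ?_)
  rcases hk with h | h <;> rw [h] <;> assumption

/-- in the game of Figure 1, no set of nodes `P` makes the pair of
contracts mutually realizable: for every `P ⊆ V` and initial node `v`, it is not
the case that player 1 realizes `□◇P` from `v` and player 0 realizes
`□◇P → □◇G` from `v`, where `G = {s6}`. -/
theorem no_weak_fairness_assumption (P : Set V) (v : V) :
    ¬ (Realizes 1 v (InfOften P) ∧
       Realizes 0 v (fun w => InfOften P w → InfOften ({6} : Set V) w)) := by
  rintro ⟨h1, h0⟩
  obtain ⟨a, ha, haP⟩ := h1.exists_mem_of_trap (d := trapLow) (T := {0, 1}) (by decide)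
    (by decide) ![0, 0, 6, 5, 4, 3, 2, 1] (by decide)
  obtain ⟨b, hb, hbP⟩ := h1.exists_mem_of_trap (d := trapHigh) (T := {2, 3}) (by decide)
    (by decide) ![2, 1, 0, 0, 5, 4, 3, 2] (by decide)
  obtain ⟨w, hw, hc, hgoal⟩ :=
    h0.exists_play (j' := 1) (by decide) (τ := fun _ x => avoidGoal x)
      (validStrategy_memoryless_iff.2 (by decide))
  simp only [Finset.mem_insert, Finset.mem_singleton] at ha hb
  exact not_infOften_goal_of_avoidGoal hw hc (hgoal (infOften_of_avoidGoal hw hc ha hb haP hbP))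

end Fig1
end
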